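/- arXiv:1204.3070 — 8 statements merged into one kernel-verified Lean document; each statement's English description precedes it below -/
import Mathlib

section
/- Let T = 3k+1 with k ≥ 1, and let w be a word of length T on states {1,2,3} without self-loops, with transition counts x_{ij}. Then x_{12} + x_{31} + x_{32} ≥ k. -/
/-!
Rank the states by `height = ![1, 0, 2]`. The counted transitions `0 → 1`, `2 → 0`, `2 → 1`
are exactly those along which the height drops; since there are no self-loops, every other
transition raises it. The height takes only three values, so it cannot rise three times in a row:
each of the `k` disjoint windows of three consecutive transitions contains a counted one.
-/

/-- Transition count of the word `s` (with `T` letters, indices `0,...,T-1`)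
from state `i` to state `j`. -/
def tcount (s : ℕ → Fin 3) (T : ℕ) (i j : Fin 3) : ℕ :=
  ((Finset.range (T - 1)).filter (fun t => s t = i ∧ s (t + 1) = j)).card

/-- `s` is a word of length `T` on the three states without self-loops. -/
def IsWord (s : ℕ → Fin 3) (T : ℕ) : Prop :=
  ∀ t, t + 1 < T → s t ≠ s (t + 1)

open Finset

lemma le_card_filter_range_mul {P : ℕ → Prop} [DecidablePred P] (m k : ℕ)
    (h : ∀ j < k, ∃ t, m * j ≤ t ∧ t < m * j + m ∧ P t) :
    k ≤ #{t ∈ range (m * k) | P t} := by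
  simpa using card_le_card_of_surjOn (s := {t ∈ range (m * k) | P t}) (t := range k)
    (· / m) fun j hj => by
      obtain ⟨t, hlo, hhi, hP⟩ := h j (mem_range.mp hj)
      refine ⟨t, ?_, ?_⟩
      · simp only [coe_filter, mem_range, Set.mem_ofPred_eq]
        exact ⟨lt_of_lt_of_le hhi (by nlinarith [mem_range.mp hj]), hP⟩
      · exact Nat.div_eq_of_lt_le (by linarith) (by rw [Nat.succ_mul]; linarith)

lemma sum_tcount_eq_card_filter (s : ℕ → Fin 3) (T : ℕ) (G : Finset (Fin 3 × Fin 3)) :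
    ∑ p ∈ G, tcount s T p.1 p.2 = #{t ∈ range (T - 1) | (s t, s (t + 1)) ∈ G} := by
  rw [card_eq_sum_card_fiberwise (f := fun t => (s t, s (t + 1)))
    (s := {t ∈ range (T - 1) | (s t, s (t + 1)) ∈ G}) (t := G) fun t ht => (mem_filter.mp ht).2]
  refine sum_congr rfl fun p _ => ?_
  rw [filter_filter, tcount]
  congr 1
  ext t
  simp only [mem_filter, Prod.ext_iff]
  aesop

def height : Fin 3 → ℕ := ![1, 0, 2]

lemma height_injective : Function.Injective height := by decide

lemma height_le_two (a : Fin 3) : height a ≤ 2 := by fin_cases a <;> decide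

def heightDrops : Finset (Fin 3 × Fin 3) := {p | height p.2 < height p.1}

lemma heightDrops_eq : heightDrops = {(0, 1), (2, 0), (2, 1)} := by decide

lemma exists_height_drop (s : ℕ → Fin 3) (T : ℕ) (hs : IsWord s T) (t : ℕ) (ht : t + 3 < T) :
    ∃ u, t ≤ u ∧ u < t + 3 ∧ height (s (u + 1)) < height (s u) := by
  by_contra! hfall
  have rise : ∀ u, t ≤ u → u < t + 3 → height (s u) < height (s (u + 1)) := fun u hlo hhi =>
    lt_of_le_of_ne (hfall u hlo hhi) (height_injective.ne (hs u (by omega)))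
  have h0 : height (s t) < height (s (t + 1)) := rise t le_rfl (by omega)
  have h1 : height (s (t + 1)) < height (s (t + 2)) := rise (t + 1) (by omega) (by omega)
  have h2 : height (s (t + 2)) < height (s (t + 3)) := rise (t + 2) (by omega) (by omega)
  have := height_le_two (s (t + 3))
  omega

theorem stmt6_general (k : ℕ) (s : ℕ → Fin 3) (hs : IsWord s (3 * k + 1)) :
    tcount s (3 * k + 1) 0 1 + tcount s (3 * k + 1) 2 0 + tcount s (3 * k + 1) 2 1 ≥ k := by
  calc k ≤ #{t ∈ range (3 * k) | height (s (t + 1)) < height (s t)} :=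
        le_card_filter_range_mul 3 k fun j hj => exists_height_drop s _ hs (3 * j) (by omega)
    _ = ∑ p ∈ heightDrops, tcount s (3 * k + 1) p.1 p.2 := by
        simp [sum_tcount_eq_card_filter, heightDrops]
    _ = _ := by
        simp [heightDrops_eq, add_assoc]

theorem stmt6 (k : ℕ) (hk : 1 ≤ k) (s : ℕ → Fin 3) (hs : IsWord s (3 * k + 1)) :
    tcount s (3 * k + 1) 0 1 + tcount s (3 * k + 1) 2 0 + tcount s (3 * k + 1) 2 1 ≥ k :=
  stmt6_general k s hs
end

section
/- Let T = 3k+2 with k ≥ 1, and let w be a word of length T on states {1,2,3} without self-loops, with transition counts x_{ij}. Then (2k+1)·(x_{12} + x_{31} + x_{32}) ≥ k·(x_{13} + x_{21} + x_{23}). -/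
private lemma six_aux : ∀ a b : Fin 3, a ≠ b →
    ((if a = 0 ∧ b = 1 then 1 else 0) + (if a = 0 ∧ b = 2 then 1 else 0) +
      (if a = 1 ∧ b = 0 then 1 else 0) + (if a = 1 ∧ b = 2 then 1 else 0) +
      (if a = 2 ∧ b = 0 then 1 else 0) + (if a = 2 ∧ b = 1 then 1 else 0) : ℕ) = 1 := by
  decide

private lemma three_aux : ∀ a b : Fin 3, a ≠ b →
    ((if a = 2 ∨ (a = 0 ∧ b = 1) then 1 else 0) : ℕ) ≤
      (if a = 0 ∧ b = 1 then 1 else 0) + (if a = 2 ∧ b = 0 then 1 else 0) +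
        (if a = 2 ∧ b = 1 then 1 else 0) := by
  decide

private lemma block_aux : ∀ a b c : Fin 3, a ≠ b → b ≠ c →
    (a = 2 ∨ (a = 0 ∧ b = 1)) ∨ (b = 2 ∨ (b = 0 ∧ c = 1)) ∨ c = 2 := by
  decide

theorem stmt7 (k : ℕ) (hk : 1 ≤ k) (s : ℕ → Fin 3) (hs : IsWord s (3 * k + 2)) :
    (2 * k + 1) * (tcount s (3 * k + 2) 0 1 + tcount s (3 * k + 2) 2 0 +
        tcount s (3 * k + 2) 2 1) ≥
      k * (tcount s (3 * k + 2) 0 2 + tcount s (3 * k + 2) 1 0 +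
        tcount s (3 * k + 2) 1 2) := by
  classical
  have hT : 3 * k + 2 - 1 = 3 * k + 1 := rfl
  -- the good predicate
  set P : ℕ → Prop := fun t => s t = 2 ∨ (s t = 0 ∧ s (t + 1) = 1) with hP
  -- Step 1: each block of 3 transitions contains a good position.
  have key : ∀ m, m ≤ k → m ≤ ((Finset.range (3 * m)).filter P).card := by
    intro m
    induction m with
    | zero => simp
    | succ n ih =>
      intro h
      have hn := ih (Nat.le_of_succ_le h)
      have h1 : s (3 * n) ≠ s (3 * n + 1) := hs _ (by omega)
      have h2 : s (3 * n + 1) ≠ s (3 * n + 2) := hs _ (by omega)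
      obtain ⟨t0, ht0lo, ht0hi, ht0P⟩ : ∃ t0, 3 * n ≤ t0 ∧ t0 < 3 * n + 3 ∧ P t0 := by
        rcases block_aux (s (3 * n)) (s (3 * n + 1)) (s (3 * n + 2)) h1 h2 with h' | h' | h'
        · exact ⟨3 * n, le_rfl, by omega, h'⟩
        · exact ⟨3 * n + 1, by omega, by omega, h'⟩
        · exact ⟨3 * n + 2, by omega, by omega, Or.inl h'⟩
      have hins : insert t0 ((Finset.range (3 * n)).filter P) ⊆
          (Finset.range (3 * (n + 1))).filter P := by
        intro x hx
        simp only [Finset.mem_insert, Finset.mem_filter, Finset.mem_range] at hx ⊢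
        rcases hx with rfl | ⟨hx1, hx2⟩
        · exact ⟨by omega, ht0P⟩
        · exact ⟨by omega, hx2⟩
      have hnotmem : t0 ∉ (Finset.range (3 * n)).filter P := fun hmem =>
        absurd (Finset.mem_range.mp (Finset.mem_filter.mp hmem).1) (by omega)
      have := Finset.card_le_card hins
      rw [Finset.card_insert_of_notMem hnotmem] at this
      omega
  have hkk := key k le_rfl
  have hmono : ((Finset.range (3 * k)).filter P).card ≤
      ((Finset.range (3 * k + 1)).filter P).card :=
    Finset.card_le_card (Finset.filter_subset_filter _ (by
      intro x hx; simp only [Finset.mem_range] at *; omega))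
  -- Step 2: the good count is at most x01 + x20 + x21.
  have hP3 : ((Finset.range (3 * k + 1)).filter P).card ≤
      tcount s (3 * k + 2) 0 1 + tcount s (3 * k + 2) 2 0 + tcount s (3 * k + 2) 2 1 := by
    simp only [tcount, hT, Finset.card_filter, ← Finset.sum_add_distrib]
    apply Finset.sum_le_sum
    intro t ht
    have hab : s t ≠ s (t + 1) := hs t (by
      have := Finset.mem_range.mp ht; omega)
    exact three_aux (s t) (s (t + 1)) hab
  have hA : k ≤ tcount s (3 * k + 2) 0 1 + tcount s (3 * k + 2) 2 0 +
      tcount s (3 * k + 2) 2 1 := le_trans hkk (le_trans hmono hP3)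
  -- Step 3: the six transition counts sum to 3k+1.
  have hsum : tcount s (3 * k + 2) 0 1 + tcount s (3 * k + 2) 0 2 +
      tcount s (3 * k + 2) 1 0 + tcount s (3 * k + 2) 1 2 +
      tcount s (3 * k + 2) 2 0 + tcount s (3 * k + 2) 2 1 = 3 * k + 1 := by
    simp only [tcount, hT, Finset.card_filter, ← Finset.sum_add_distrib]
    rw [Finset.sum_congr rfl (fun t ht => six_aux (s t) (s (t + 1)) (hs t (by
      have := Finset.mem_range.mp ht; omega)))]
    simp
  -- Step 4: conclude.
  have hB : tcount s (3 * k + 2) 0 2 + tcount s (3 * k + 2) 1 0 +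
      tcount s (3 * k + 2) 1 2 ≤ 2 * k + 1 := by omega
  calc k * (tcount s (3 * k + 2) 0 2 + tcount s (3 * k + 2) 1 0 +
        tcount s (3 * k + 2) 1 2)
      ≤ k * (2 * k + 1) := Nat.mul_le_mul_left k hB
    _ = (2 * k + 1) * k := Nat.mul_comm _ _
    _ ≤ (2 * k + 1) * (tcount s (3 * k + 2) 0 1 + tcount s (3 * k + 2) 2 0 +
        tcount s (3 * k + 2) 2 1) := Nat.mul_le_mul_left _ hA
end

section
/- Let T = 2k with k ≥ 1, and let w be a word of length T on states {1,2,3} without self-loops, with transition counts x_{ij}. Then 2·x_{12} + x_{13} + x_{32} ≥ k − 1. Moreover if the last state of w equals 2, then 2·x_{12} + x_{13} + x_{32} ≥ k. -/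
/-- Potential function for the states. -/
def Phi : Fin 3 → ℕ := ![0, 2, 1]

lemma tcount_succ (s : ℕ → Fin 3) (T : ℕ) (hT : 1 ≤ T) (i j : Fin 3) :
    tcount s (T + 1) i j
      = tcount s T i j + (if s (T - 1) = i ∧ s T = j then 1 else 0) := by
  unfold tcount
  have h1 : T + 1 - 1 = (T - 1) + 1 := by omega
  have h2 : T - 1 + 1 = T := by omega
  rw [h1, Finset.range_add_one, Finset.filter_insert]
  split
  · rw [Finset.card_insert_of_notMem (by simp)]
    rename_i h
    rw [h2] at h
    simp [h]
  · rename_i h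
    rw [h2] at h
    simp [h]

lemma phi_step (a b : Fin 3) (hab : a ≠ b) :
    Phi b + 1 ≤ Phi a + 2 * (2 * (if a = 0 ∧ b = 1 then 1 else 0)
      + (if a = 0 ∧ b = 2 then 1 else 0) + (if a = 2 ∧ b = 1 then 1 else 0)) := by
  fin_cases a <;> fin_cases b <;> simp_all [Phi]

lemma key (s : ℕ → Fin 3) : ∀ T, 1 ≤ T → IsWord s T →
    T - 1 + Phi (s (T - 1)) ≤
      2 * (2 * tcount s T 0 1 + tcount s T 0 2 + tcount s T 2 1) + Phi (s 0) := by
  intro T hT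
  induction T, hT using Nat.le_induction with
  | base => simp [tcount]
  | succ T hT ih =>
    intro hw
    have hw' : IsWord s T := fun t ht => hw t (by omega)
    have hIH := ih hw'
    have hne : s (T - 1) ≠ s T := by
      have := hw (T - 1) (by omega)
      rwa [Nat.sub_add_cancel hT] at this
    have h01 := tcount_succ s T hT 0 1
    have h02 := tcount_succ s T hT 0 2
    have h21 := tcount_succ s T hT 2 1
    have hstep := phi_step (s (T - 1)) (s T) hne
    have hT1 : T + 1 - 1 = T := by omega
    rw [hT1, h01, h02, h21]
    omega

theorem stmt8 (k : ℕ) (hk : 1 ≤ k) (s : ℕ → Fin 3) (hs : IsWord s (2 * k)) :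
    2 * tcount s (2 * k) 0 1 + tcount s (2 * k) 0 2 + tcount s (2 * k) 2 1 ≥ k - 1 ∧
      (s (2 * k - 1) = 1 →
        2 * tcount s (2 * k) 0 1 + tcount s (2 * k) 0 2 + tcount s (2 * k) 2 1 ≥ k) := by
  have hkey := key s (2 * k) (by omega) hs
  have hPhi0 : Phi (s 0) ≤ 2 := by have : ∀ a : Fin 3, Phi a ≤ 2 := by decide
                                   exact this _
  constructor
  · omega
  · intro hlast
    rw [hlast, show Phi (1 : Fin 3) = 2 from rfl] at hkey
    omega
end

section
/- Let T = 2k with k ≥ 3, and let w be a word of length T on states {1,2,3} without self-loops, with transition counts x_{ij}. Then (3k−1)·x_{12} + k·(x_{13} + x_{32}) ≥ (k−1)·(x_{21} + x_{23} + x_{31}). -/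
open Finset

theorem sum_tcount_right (s : ℕ → Fin 3) (T : ℕ) (i : Fin 3) :
    ∑ j, tcount s T i j = #{t ∈ range (T - 1) | s t = i} := by
  rw [card_eq_sum_card_fiberwise (f := fun t => s (t + 1)) (t := univ) (by simp)]
  simp only [tcount, filter_filter]

theorem sum_tcount_left (s : ℕ → Fin 3) (T : ℕ) (j : Fin 3) :
    ∑ i, tcount s T i j = #{t ∈ range (T - 1) | s (t + 1) = j} := by
  rw [card_eq_sum_card_fiberwise (f := s) (t := univ) (by simp)]
  simp only [tcount, filter_filter, and_comm]

theorem sum_sum_tcount (s : ℕ → Fin 3) (T : ℕ) : ∑ i, ∑ j, tcount s T i j = T - 1 := by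
  simp only [sum_tcount_right]
  rw [← card_eq_sum_card_fiberwise (f := s) (t := univ) (by simp), card_range]

theorem le_card_filter_ne {α : Type*} [DecidableEq α] (f : ℕ → α) (c : α) (m : ℕ)
    (hf : ∀ t, t + 1 < 2 * m → f t ≠ f (t + 1)) : m ≤ #{t ∈ range (2 * m) | f t ≠ c} := by
  induction m with
  | zero => simp
  | succ m ih =>
    have hlast := hf (2 * m) (by omega)
    have hprefix := ih fun t ht => hf t (by omega)
    rw [card_filter, show 2 * (m + 1) = 2 * m + 1 + 1 by ring, sum_range_succ, sum_range_succ,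
      ← card_filter]
    split_ifs <;> try omega
    simp_all

namespace IsWord

variable {s : ℕ → Fin 3}

theorem tcount_self {T : ℕ} (hs : IsWord s T) (i : Fin 3) : tcount s T i i = 0 := by
  refine card_eq_zero.mpr (filter_eq_empty_iff.mpr fun t ht h => ?_)
  exact hs t (by simp at ht; omega) (h.1.trans h.2.symm)

theorem sub_one_le_card_out_add_card_in {k : ℕ} (hs : IsWord s (2 * k)) :
    k - 1 ≤ #{t ∈ range (2 * k - 1) | s t = 0} + #{t ∈ range (2 * k - 1) | s (t + 1) = 1} := by
  have hpairs := le_card_filter_ne (fun t => s (t + 1)) 2 (k - 1) fun t ht => hs (t + 1) (by omega)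
  have hsplit : {t ∈ range (2 * (k - 1)) | s (t + 1) ≠ 2} ⊆
      {t ∈ range (2 * (k - 1)) | s (t + 1) = 0} ∪ {t ∈ range (2 * k - 1) | s (t + 1) = 1} := by
    intro t ht
    simp only [mem_filter, mem_union, mem_range] at ht ⊢
    have : s (t + 1) = 0 ∨ s (t + 1) = 1 := by omega
    omega
  have hshift : #{t ∈ range (2 * (k - 1)) | s (t + 1) = 0} ≤ #{t ∈ range (2 * k - 1) | s t = 0} :=
    card_le_card_of_injOn (· + 1) (fun t ht => by simp at ht ⊢; omega) (fun _ _ _ _ => by simp)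
  calc k - 1 ≤ _ := hpairs
    _ ≤ _ := (card_le_card hsplit).trans (card_union_le _ _)
    _ ≤ _ := by omega

end IsWord

theorem weighted_count_ineq_of_bounds (k a b c d e f : ℕ) (hlow : k - 1 ≤ 2 * a + b + f)
    (htot : a + b + c + d + e + f = 2 * k - 1) :
    (3 * k - 1) * a + k * (b + f) ≥ (k - 1) * (c + d + e) := by
  rcases k with _ | m
  · simp
  · simp only [Nat.add_sub_cancel] at hlow ⊢
    rw [show 3 * (m + 1) - 1 = 3 * m + 2 by omega]
    have htot' : m * (c + d + e) + m * (a + b + f) = m * (2 * m + 1) := by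
      rw [← mul_add]; congr 1; omega
    nlinarith [Nat.mul_le_mul_left (2 * m + 1) hlow]

theorem stmt9_general (k : ℕ) (s : ℕ → Fin 3) (hs : IsWord s (2 * k)) :
    (3 * k - 1) * tcount s (2 * k) 0 1 +
        k * (tcount s (2 * k) 0 2 + tcount s (2 * k) 2 1) ≥
      (k - 1) * (tcount s (2 * k) 1 0 + tcount s (2 * k) 1 2 + tcount s (2 * k) 2 0) := by
  have htotal := sum_sum_tcount s (2 * k)
  have hout := sum_tcount_right s (2 * k) 0
  have hin := sum_tcount_left s (2 * k) 1
  simp only [Fin.sum_univ_three, hs.tcount_self] at htotal hout hin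
  refine weighted_count_ineq_of_bounds k _ _ _ _ _ _ ?_ (by omega)
  have := hs.sub_one_le_card_out_add_card_in
  omega

theorem stmt9 (k : ℕ) (hk : 3 ≤ k) (s : ℕ → Fin 3) (hs : IsWord s (2 * k)) :
    (3 * k - 1) * tcount s (2 * k) 0 1 +
        k * (tcount s (2 * k) 0 2 + tcount s (2 * k) 2 1) ≥
      (k - 1) * (tcount s (2 * k) 1 0 + tcount s (2 * k) 1 2 + tcount s (2 * k) 2 0) :=
  stmt9_general k s hs
end

section
/- Let w be a word of length 7 on states {1,2,3} without self-loops (six consecutive transitions), with transition counts x̄_{ij}, and let (i,j,t) be any permutation of (1,2,3). Then 2·x̄_{ij} + x̄_{it} + x̄_{tj} ≥ x̄_{ji} + 1. -/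
def c (a b i j : Fin 3) : ℕ := if a = i ∧ b = j then 1 else 0

def M (a0 a1 a2 a3 a4 a5 a6 i j : Fin 3) : ℕ :=
  c a0 a1 i j + c a1 a2 i j + c a2 a3 i j + c a3 a4 i j + c a4 a5 i j + c a5 a6 i j

set_option maxRecDepth 10000 in
lemma aux : ∀ a0 a1 a2 a3 a4 a5 a6 : Fin 3,
    a0 ≠ a1 → a1 ≠ a2 → a2 ≠ a3 → a3 ≠ a4 → a4 ≠ a5 → a5 ≠ a6 →
    ∀ i j t : Fin 3, i ≠ j → i ≠ t → j ≠ t →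
    2 * M a0 a1 a2 a3 a4 a5 a6 i j + M a0 a1 a2 a3 a4 a5 a6 i t
      + M a0 a1 a2 a3 a4 a5 a6 t j ≥ M a0 a1 a2 a3 a4 a5 a6 j i + 1 := by decide

lemma tcount_eq (s : ℕ → Fin 3) (i j : Fin 3) :
    tcount s 7 i j = M (s 0) (s 1) (s 2) (s 3) (s 4) (s 5) (s 6) i j := by
  rw [tcount, show 7 - 1 = 6 from rfl, Finset.card_filter]
  rw [Finset.sum_range_succ, Finset.sum_range_succ, Finset.sum_range_succ,
    Finset.sum_range_succ, Finset.sum_range_succ, Finset.sum_range_succ,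
    Finset.sum_range_zero]
  simp [M, c]

theorem stmt12 (s : ℕ → Fin 3) (hs : IsWord s 7) (i j t : Fin 3)
    (hij : i ≠ j) (hit : i ≠ t) (hjt : j ≠ t) :
    2 * tcount s 7 i j + tcount s 7 i t + tcount s 7 t j ≥ tcount s 7 j i + 1 := by
  simp only [tcount_eq]
  exact aux (s 0) (s 1) (s 2) (s 3) (s 4) (s 5) (s 6)
    (hs 0 (by norm_num)) (hs 1 (by norm_num)) (hs 2 (by norm_num))
    (hs 3 (by norm_num)) (hs 4 (by norm_num)) (hs 5 (by norm_num))
    i j t hij hit hjt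
end

section
/- Let k ≥ 1 and let w be a word of length T = 6k+1 on states {1,2,3} without self-loops, with transition counts x_{ij}, and let (i,j,t) be any permutation of (1,2,3). Then 2·x_{ij} + x_{it} + x_{tj} ≥ x_{ji} + 2k − 1. Moreover, if equality holds, then the final state of w equals i. -/
/-- weight of a transition -/
def wfun (i j t a b : Fin 3) : ℤ :=
  2 * (if a = i ∧ b = j then 1 else 0) + (if a = i ∧ b = t then 1 else 0)
    + (if a = t ∧ b = j then 1 else 0) - (if a = j ∧ b = i then 1 else 0)

/-- DP step: minimum weight of paths ending at each of the states i, j, t. -/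
def Fstep (v : ℤ × ℤ × ℤ) : ℤ × ℤ × ℤ :=
  (min (v.2.1 - 1) v.2.2, min (v.1 + 2) (v.2.2 + 1), min (v.1 + 1) v.2.1)

def hvec : ℕ → ℤ × ℤ × ℤ
  | 0 => (0, 0, 0)
  | n + 1 => Fstep (hvec n)

def vval (i j t : Fin 3) (v : ℤ × ℤ × ℤ) (e : Fin 3) : ℤ :=
  if e = i then v.1 else if e = j then v.2.1 else v.2.2

lemma tri (i j t e : Fin 3) (hij : i ≠ j) (hit : i ≠ t) (hjt : j ≠ t) :
    e = i ∨ e = j ∨ e = t := by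
  revert hij hit hjt; revert i j t e; decide

lemma Fstep_shift (v : ℤ × ℤ × ℤ) :
    Fstep (v.1 + 2, v.2.1 + 2, v.2.2 + 2)
      = ((Fstep v).1 + 2, (Fstep v).2.1 + 2, (Fstep v).2.2 + 2) := by
  simp only [Fstep, Prod.mk.injEq]
  refine ⟨?_, ?_, ?_⟩ <;> omega

lemma hvec_shift : ∀ n, 1 ≤ n →
    hvec (n + 6) = ((hvec n).1 + 2, (hvec n).2.1 + 2, (hvec n).2.2 + 2) := by
  intro n hn
  induction n with
  | zero => omega
  | succ m ih =>
    rcases Nat.eq_zero_or_pos m with hm | hm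
    · subst hm; norm_num [hvec, Fstep]
    · have := ih hm
      show hvec (m + 6 + 1) = _
      rw [show m + 6 + 1 = (m + 6) + 1 from rfl, hvec, this, hvec]
      exact Fstep_shift _

lemma hvec_6k : ∀ k : ℕ, 1 ≤ k →
    hvec (6 * k) = (2 * (k : ℤ) - 1, 2 * (k : ℤ), 2 * (k : ℤ)) := by
  intro k hk
  induction k with
  | zero => omega
  | succ m ih =>
    by_cases hm : 1 ≤ m
    · have h1 : 6 * (m + 1) = 6 * m + 6 := by ring
      rw [h1, hvec_shift _ (by omega), ih hm]
      push_cast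
      refine Prod.ext ?_ (Prod.ext ?_ ?_) <;> simp <;> ring
    · have hm0 : m = 0 := by omega
      subst hm0; norm_num [hvec, Fstep]

lemma step_ineq (i j t : Fin 3) (hij : i ≠ j) (hit : i ≠ t) (hjt : j ≠ t)
    (e e' : Fin 3) (hne : e ≠ e') (v : ℤ × ℤ × ℤ) :
    vval i j t (Fstep v) e' ≤ vval i j t v e + wfun i j t e e' := by
  rcases tri i j t e hij hit hjt with he | he | he <;>
    rcases tri i j t e' hij hit hjt with he' | he' | he' <;>
      subst he <;> subst he' <;>
        simp_all [vval, wfun, Fstep, hij.symm, hit.symm, hjt.symm] <;> omega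

lemma lower (i j t : Fin 3) (hij : i ≠ j) (hit : i ≠ t) (hjt : j ≠ t)
    (s : ℕ → Fin 3) :
    ∀ N, (∀ m, m < N → s m ≠ s (m + 1)) →
      vval i j t (hvec N) (s N)
        ≤ ∑ m ∈ Finset.range N, wfun i j t (s m) (s (m + 1)) := by
  intro N
  induction N with
  | zero =>
    intro _
    simp only [hvec, vval, Finset.range_zero, Finset.sum_empty]
    split <;> [skip; split] <;> simp
  | succ n ih =>
    intro hno
    rw [Finset.sum_range_succ]
    have h1 := ih (fun m hm => hno m (by omega))
    have h2 := step_ineq i j t hij hit hjt (s n) (s (n + 1)) (hno n (by omega)) (hvec n)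
    calc vval i j t (hvec (n + 1)) (s (n + 1))
        = vval i j t (Fstep (hvec n)) (s (n + 1)) := by rw [hvec]
      _ ≤ vval i j t (hvec n) (s n) + wfun i j t (s n) (s (n + 1)) := h2
      _ ≤ _ := by linarith

lemma sum_eq (i j t : Fin 3) (s : ℕ → Fin 3) (N : ℕ) :
    ∑ m ∈ Finset.range N, wfun i j t (s m) (s (m + 1))
      = 2 * (((Finset.range N).filter (fun m => s m = i ∧ s (m + 1) = j)).card : ℤ)
        + (((Finset.range N).filter (fun m => s m = i ∧ s (m + 1) = t)).card : ℤ)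
        + (((Finset.range N).filter (fun m => s m = t ∧ s (m + 1) = j)).card : ℤ)
        - (((Finset.range N).filter (fun m => s m = j ∧ s (m + 1) = i)).card : ℤ) := by
  simp only [wfun]
  rw [Finset.sum_sub_distrib, Finset.sum_add_distrib, Finset.sum_add_distrib,
    ← Finset.mul_sum]
  congr 1 <;> [skip; simp [Finset.sum_boole]]
  congr 1 <;> [skip; simp [Finset.sum_boole]]
  congr 1 <;> simp [Finset.sum_boole]

theorem stmt14 (k : ℕ) (hk : 1 ≤ k) (s : ℕ → Fin 3) (hs : IsWord s (6 * k + 1))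
    (i j t : Fin 3) (hij : i ≠ j) (hit : i ≠ t) (hjt : j ≠ t) :
    2 * tcount s (6 * k + 1) i j + tcount s (6 * k + 1) i t + tcount s (6 * k + 1) t j ≥
        tcount s (6 * k + 1) j i + (2 * k - 1) ∧
      (2 * tcount s (6 * k + 1) i j + tcount s (6 * k + 1) i t + tcount s (6 * k + 1) t j =
          tcount s (6 * k + 1) j i + (2 * k - 1) →
        s (6 * k) = i) := by
  have hno : ∀ m, m < 6 * k → s m ≠ s (m + 1) := fun m hm => hs m (by omega)
  have hL := lower i j t hij hit hjt s (6 * k) hno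
  rw [sum_eq, hvec_6k k hk] at hL
  have hT : (6 * k + 1) - 1 = 6 * k := by omega
  simp only [tcount, hT]
  -- hL : vval i j t (2k-1,2k,2k) (s (6k)) ≤ 2A + C + F - B
  have hval : (if s (6 * k) = i then (2 * (k:ℤ) - 1) else 2 * (k:ℤ))
      ≤ vval i j t ((2 * (k:ℤ) - 1, 2 * (k:ℤ), 2 * (k:ℤ))) (s (6 * k)) := by
    unfold vval
    split
    · simp_all
    · split <;> simp_all
  constructor
  · split at hval <;> omega
  · intro heq
    by_contra hne
    rw [if_neg hne] at hval
    omega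
end

section
/- Let k ≥ 1 and T = 6k+3, and let w be a word of length T on states {1,2,3} without self-loops, with transition counts x_{ij}. Then (5k+2)·x_{12} + (2k+1)·x_{13} + (2k+1)·x_{32} ≥ (4k+1)·x_{21} + k·x_{23} + k·x_{31}. -/
/-- Potential function: `phi 0 = 0`, `phi 2 = 1`, `phi 1 = 2`. -/
def phi : Fin 3 → ℤ := ![0, 2, 1]

lemma ind_one : ∀ i j : Fin 3, i ≠ j →
    (if i = 0 ∧ j = 1 then (1:ℤ) else 0) + (if i = 0 ∧ j = 2 then (1:ℤ) else 0)
      + (if i = 1 ∧ j = 0 then (1:ℤ) else 0) + (if i = 1 ∧ j = 2 then (1:ℤ) else 0)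
      + (if i = 2 ∧ j = 0 then (1:ℤ) else 0) + (if i = 2 ∧ j = 1 then (1:ℤ) else 0) = 1 := by
  decide

lemma phi_step_s15 : ∀ i j : Fin 3, i ≠ j →
    2 * (if i = 0 ∧ j = 1 then (1:ℤ) else 0) + (if i = 0 ∧ j = 2 then (1:ℤ) else 0)
      + (if i = 2 ∧ j = 1 then (1:ℤ) else 0)
      - (2 * (if i = 1 ∧ j = 0 then (1:ℤ) else 0) + (if i = 1 ∧ j = 2 then (1:ℤ) else 0)
        + (if i = 2 ∧ j = 0 then (1:ℤ) else 0)) = phi j - phi i := by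
  decide

lemma phi_bound : ∀ v : Fin 3, 0 ≤ phi v ∧ phi v ≤ 2 := by decide

theorem stmt15 (k : ℕ) (hk : 1 ≤ k) (s : ℕ → Fin 3) (hs : IsWord s (6 * k + 3)) :
    (5 * k + 2) * tcount s (6 * k + 3) 0 1 + (2 * k + 1) * tcount s (6 * k + 3) 0 2 +
        (2 * k + 1) * tcount s (6 * k + 3) 2 1 ≥
      (4 * k + 1) * tcount s (6 * k + 3) 1 0 + k * tcount s (6 * k + 3) 1 2 +
        k * tcount s (6 * k + 3) 2 0 := by
  have hT : 6 * k + 3 - 1 = 6 * k + 2 := by omega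
  have hcard : ∀ i j : Fin 3, (tcount s (6 * k + 3) i j : ℤ)
      = ∑ t ∈ Finset.range (6 * k + 2),
          (if s t = i ∧ s (t + 1) = j then (1 : ℤ) else 0) := by
    intro i j
    unfold tcount
    rw [hT, Finset.card_filter]
    push_cast
    rfl
  have hne : ∀ t ∈ Finset.range (6 * k + 2), s t ≠ s (t + 1) := by
    intro t ht
    exact hs t (by simp only [Finset.mem_range] at ht; omega)
  -- F1 : total number of transitions
  have hF1 : (tcount s (6*k+3) 0 1 : ℤ) + tcount s (6*k+3) 0 2 + tcount s (6*k+3) 1 0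
      + tcount s (6*k+3) 1 2 + tcount s (6*k+3) 2 0 + tcount s (6*k+3) 2 1
      = 6 * k + 2 := by
    simp only [hcard, ← Finset.sum_add_distrib]
    rw [Finset.sum_congr rfl (fun t ht => ind_one (s t) (s (t+1)) (hne t ht))]
    simp
  -- F2 : telescoping of the potential
  have htele : ∑ t ∈ Finset.range (6 * k + 2), (phi (s (t+1)) - phi (s t))
      = phi (s (6*k+2)) - phi (s 0) := Finset.sum_range_sub (fun t => phi (s t)) (6*k+2)
  have hF2 : 2 * (tcount s (6*k+3) 0 1 : ℤ) + tcount s (6*k+3) 0 2 + tcount s (6*k+3) 2 1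
      - (2 * tcount s (6*k+3) 1 0 + tcount s (6*k+3) 1 2 + tcount s (6*k+3) 2 0)
      = phi (s (6*k+2)) - phi (s 0) := by
    rw [← htele]
    simp only [hcard, Finset.mul_sum, ← Finset.sum_add_distrib, ← Finset.sum_sub_distrib]
    exact Finset.sum_congr rfl (fun t ht => phi_step_s15 (s t) (s (t+1)) (hne t ht))
  have hb1 := phi_bound (s (6*k+2))
  have hb2 := phi_bound (s 0)
  set Δ : ℤ := phi (s (6*k+2)) - phi (s 0) with hΔ
  set a := (tcount s (6*k+3) 0 1 : ℤ)
  set b := (tcount s (6*k+3) 0 2 : ℤ)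
  set c := (tcount s (6*k+3) 1 0 : ℤ)
  set d := (tcount s (6*k+3) 1 2 : ℤ)
  set e := (tcount s (6*k+3) 2 0 : ℤ)
  set f := (tcount s (6*k+3) 2 1 : ℤ)
  have key : a + b + f ≤ 4 * k + 2 + Δ := by omega
  have hid : (5*(k:ℤ)+2) * a + (2*k+1) * b + (2*k+1) * f - ((4*k+1) * c + k * d + k * e)
      = (3*(k:ℤ)+1) * (4*k+2+Δ-(a+b+f)) := by
    linear_combination (2*(k:ℤ)+1) * hF1 + (3*(k:ℤ)+1) * hF2
  have hprod : (0:ℤ) ≤ (3*(k:ℤ)+1) * (4*k+2+Δ-(a+b+f)) :=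
    mul_nonneg (by positivity) (by linarith)
  zify
  linarith [hid, hprod]
end

section
/- Let k ≥ 1 and T = 6k, and let w be a word of length T on states {1,2,3} without self-loops, with transition counts x_{ij}. Then (10k−1)·x_{12} + 4k·x_{13} + 4k·x_{32} ≥ (8k−2)·x_{21} + (2k−1)·x_{23} + (2k−1)·x_{31}. -/
open Finset

lemma fin3cases (a : Fin 3) : a = 0 ∨ a = 1 ∨ a = 2 := by
  revert a; decide

lemma tcount_diag (s : ℕ → Fin 3) (T : ℕ) (hs : IsWord s T) (i : Fin 3) :
    tcount s T i i = 0 := by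
  unfold tcount
  rw [Finset.card_eq_zero, Finset.filter_eq_empty_iff]
  intro t ht
  rintro ⟨h1, h2⟩
  have ht' : t < T - 1 := Finset.mem_range.mp ht
  exact hs t (by omega) (h1.trans h2.symm)

lemma sum_tcount (s : ℕ → Fin 3) (T : ℕ) (hs : IsWord s T) :
    tcount s T 0 1 + tcount s T 0 2 + tcount s T 1 0 + tcount s T 1 2 +
      tcount s T 2 0 + tcount s T 2 1 = T - 1 := by
  have h := Finset.card_eq_sum_card_fiberwise
    (s := Finset.range (T - 1)) (t := (Finset.univ : Finset (Fin 3 × Fin 3)))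
    (f := fun t => (s t, s (t + 1))) (fun x _ => Finset.mem_univ _)
  rw [Finset.card_range, Fintype.sum_prod_type, Fin.sum_univ_three] at h
  simp only [Fin.sum_univ_three, Prod.mk.injEq] at h
  have d0 := tcount_diag s T hs 0
  have d1 := tcount_diag s T hs 1
  have d2 := tcount_diag s T hs 2
  unfold tcount at *
  omega

lemma tcount_out (s : ℕ → Fin 3) (T : ℕ) (i : Fin 3) :
    tcount s T i 0 + tcount s T i 1 + tcount s T i 2
      = ((Finset.range (T - 1)).filter (fun t => s t = i)).card := by
  have h := Finset.card_eq_sum_card_fiberwise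
    (s := (Finset.range (T - 1)).filter (fun t => s t = i))
    (t := (Finset.univ : Finset (Fin 3))) (f := fun t => s (t + 1))
    (fun x _ => Finset.mem_univ _)
  rw [Fin.sum_univ_three] at h
  simp only [Finset.filter_filter] at h
  unfold tcount
  omega

lemma tcount_in (s : ℕ → Fin 3) (T : ℕ) (i : Fin 3) :
    tcount s T 0 i + tcount s T 1 i + tcount s T 2 i
      = ((Finset.range (T - 1)).filter (fun t => s (t + 1) = i)).card := by
  have h := Finset.card_eq_sum_card_fiberwise
    (s := (Finset.range (T - 1)).filter (fun t => s (t + 1) = i))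
    (t := (Finset.univ : Finset (Fin 3))) (f := fun t => s t)
    (fun x _ => Finset.mem_univ _)
  rw [Fin.sum_univ_three] at h
  simp only [Finset.filter_filter] at h
  have e : ∀ j : Fin 3, tcount s T j i
      = ((Finset.range (T - 1)).filter (fun t => s (t + 1) = i ∧ s t = j)).card := by
    intro j
    unfold tcount
    congr 1
    ext t
    simp only [Finset.mem_filter]
    tauto
  rw [e 0, e 1, e 2]
  omega

lemma flow (s : ℕ → Fin 3) (T : ℕ) (hT : 1 ≤ T) (i : Fin 3) :
    (tcount s T i 0 + tcount s T i 1 + tcount s T i 2)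
        + (if s (T - 1) = i then 1 else 0)
      = (tcount s T 0 i + tcount s T 1 i + tcount s T 2 i)
        + (if s 0 = i then 1 else 0) := by
  obtain ⟨n, rfl⟩ : ∃ n, T = n + 1 := ⟨T - 1, by omega⟩
  have hocc1 : ((Finset.range (n + 1)).filter (fun t => s t = i)).card
      = ((Finset.range n).filter (fun t => s t = i)).card
        + (if s n = i then 1 else 0) := by
    rw [Finset.range_add_one, Finset.filter_insert]
    split
    · rw [Finset.card_insert_of_notMem (by simp)]
    · simp
  have hocc2 : ((Finset.range (n + 1)).filter (fun t => s t = i)).card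
      = ((Finset.range n).filter (fun t => s (t + 1) = i)).card
        + (if s 0 = i then 1 else 0) := by
    have hr : Finset.range (n + 1) = insert 0 ((Finset.range n).image (· + 1)) := by
      ext x
      simp only [Finset.mem_range, Finset.mem_insert, Finset.mem_image]
      constructor
      · intro hx
        rcases Nat.eq_zero_or_pos x with h | h
        · exact Or.inl h
        · exact Or.inr ⟨x - 1, by omega, by omega⟩
      · rintro (rfl | ⟨a, ha, rfl⟩) <;> omega
    rw [hr, Finset.filter_insert]
    have himg : ((Finset.range n).image (· + 1)).filter (fun t => s t = i)
        = ((Finset.range n).filter (fun t => s (t + 1) = i)).image (· + 1) := by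
      ext x
      simp only [Finset.mem_filter, Finset.mem_image]
      constructor
      · rintro ⟨⟨a, ha, rfl⟩, h2⟩
        exact ⟨a, ⟨ha, h2⟩, rfl⟩
      · rintro ⟨a, ⟨ha, h2⟩, rfl⟩
        exact ⟨⟨a, ha, rfl⟩, h2⟩
    have hcard : (((Finset.range n).filter (fun t => s (t + 1) = i)).image (· + 1)).card
        = ((Finset.range n).filter (fun t => s (t + 1) = i)).card :=
      Finset.card_image_of_injective _ (fun a b h => by omega)
    split
    · rw [Finset.card_insert_of_notMem (by rw [himg]; simp), himg, hcard]
    · rw [himg, hcard, Nat.add_zero]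
  have hout := tcount_out s (n + 1) i
  have hin := tcount_in s (n + 1) i
  simp only [Nat.add_sub_cancel] at hout hin ⊢
  omega

lemma arith (k x01 x02 x10 x12 x20 x21 a0 a1 b0 b1 : ℕ)
    (hk : 1 ≤ k)
    (ha0 : a0 ≤ 1) (ha1 : a1 ≤ 1) (hb0 : b0 ≤ 1) (hb1 : b1 ≤ 1)
    (ha : a0 + a1 ≤ 1) (hb : b0 + b1 ≤ 1)
    (hsum : x01 + x02 + x10 + x12 + x20 + x21 + 1 = 6 * k)
    (hf0 : x01 + x02 + b0 = x10 + x20 + a0)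
    (hf1 : x10 + x12 + b1 = x01 + x21 + a1) :
    (8 * k - 2) * x10 + (2 * k - 1) * x12 + (2 * k - 1) * x20
      ≤ (10 * k - 1) * x01 + 4 * k * x02 + 4 * k * x21 := by
  zify [show 1 ≤ 10 * k by omega, show 2 ≤ 8 * k by omega, show 1 ≤ 2 * k by omega]
  have hsum' : (x01 : ℤ) + x02 + x10 + x12 + x20 + x21 + 1 = 6 * k := by
    exact_mod_cast hsum
  have hf0' : (x01 : ℤ) + x02 + b0 = x10 + x20 + a0 := by exact_mod_cast hf0
  have hf1' : (x10 : ℤ) + x12 + b1 = x01 + x21 + a1 := by exact_mod_cast hf1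
  have hk' : (1 : ℤ) ≤ k := by exact_mod_cast hk
  have key : 3 * ((10 * (k : ℤ) - 1) * x01 + 4 * k * x02 + 4 * k * x21
        - ((8 * k - 2) * x10 + (2 * k - 1) * x12 + (2 * k - 1) * x20))
      = (6 * k - 1) * ((x01 : ℤ) + x12 + x20 + 2
          + 2 * ((a0 : ℤ) - b0) - 2 * ((a1 : ℤ) - b1)) := by
    linear_combination (12 * (k : ℤ) - 2) * hf0' - (12 * (k : ℤ) - 2) * hf1' + 2 * hsum'
  have hq : (0 : ℤ) ≤ (x01 : ℤ) + x12 + x20 + 2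
      + 2 * ((a0 : ℤ) - b0) - 2 * ((a1 : ℤ) - b1) := by
    omega
  have h6k : (0 : ℤ) ≤ 6 * (k : ℤ) - 1 := by omega
  nlinarith [mul_nonneg h6k hq]

theorem stmt16 (k : ℕ) (hk : 1 ≤ k) (s : ℕ → Fin 3) (hs : IsWord s (6 * k)) :
    (10 * k - 1) * tcount s (6 * k) 0 1 + 4 * k * tcount s (6 * k) 0 2 +
        4 * k * tcount s (6 * k) 2 1 ≥
      (8 * k - 2) * tcount s (6 * k) 1 0 + (2 * k - 1) * tcount s (6 * k) 1 2 +
        (2 * k - 1) * tcount s (6 * k) 2 0 := by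
  have hT : 1 ≤ 6 * k := by omega
  have hsum := sum_tcount s (6 * k) hs
  have hf0 := flow s (6 * k) hT 0
  have hf1 := flow s (6 * k) hT 1
  have d0 := tcount_diag s (6 * k) hs 0
  have d1 := tcount_diag s (6 * k) hs 1
  have d2 := tcount_diag s (6 * k) hs 2
  set a0 : ℕ := if s 0 = 0 then 1 else 0 with ha0def
  set a1 : ℕ := if s 0 = 1 then 1 else 0 with ha1def
  set b0 : ℕ := if s (6 * k - 1) = 0 then 1 else 0 with hb0def
  set b1 : ℕ := if s (6 * k - 1) = 1 then 1 else 0 with hb1def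
  have ha0 : a0 ≤ 1 := by rw [ha0def]; split <;> omega
  have ha1 : a1 ≤ 1 := by rw [ha1def]; split <;> omega
  have hb0 : b0 ≤ 1 := by rw [hb0def]; split <;> omega
  have hb1 : b1 ≤ 1 := by rw [hb1def]; split <;> omega
  have ha : a0 + a1 ≤ 1 := by
    rw [ha0def, ha1def]
    rcases fin3cases (s 0) with h | h | h <;> simp [h]
  have hb : b0 + b1 ≤ 1 := by
    rw [hb0def, hb1def]
    rcases fin3cases (s (6 * k - 1)) with h | h | h <;> simp [h]
  exact arith k (tcount s (6 * k) 0 1) (tcount s (6 * k) 0 2) (tcount s (6 * k) 1 0)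
    (tcount s (6 * k) 1 2) (tcount s (6 * k) 2 0) (tcount s (6 * k) 2 1)
    a0 a1 b0 b1 hk ha0 ha1 hb0 hb1 ha hb (by omega) (by omega) (by omega)
end
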